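/- Let Λ, Γ ⊆ ℝ^d be nonempty compact convex sets and r a nonnegative integer. Define Ω = {(x, y) ∈ ℝ^d × {0,1} : x ∈ y ⊙ Λ + (1−y) ⊙ Γ} and Ω̃^agg = {(X, Y) ∈ ℝ^d × [0, r] : X ∈ Y ⊙ Λ + (r − Y) ⊙ Γ}. Then Ω̃^agg = conv(r ⊗ Ω) = r ⊙ conv(Ω). -/

import Mathlib

/-- `r ⊙ F`: the dilation of a set. -/
noncomputable def dil {V : Type*} [Zero V] [SMul ℝ V] (r : ℝ) (F : Set V) : Set V :=
  if r = 0 then {0} else (fun x => r • x) '' F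

/-- `p ⊗ F`: the set of sums of `p` elements of `F` (and `{0}` for `p = 0`). -/
noncomputable def nsum {V : Type*} [AddCommMonoid V] (p : ℕ) (F : Set V) : Set V :=
  if p = 0 then {0} else {x | ∃ f : Fin p → V, (∀ i, f i ∈ F) ∧ x = ∑ i, f i}

/-!
`Ω` is `Λ × {1} ∪ Γ × {0}`. Since `Λ` and `Γ` are convex, its convex hull is the join of the two
pieces, which is exactly the perspective set `{(x, y) : 0 ≤ y ≤ 1, x ∈ y Λ + (1 - y) Γ}`.
Convex hulls commute with Minkowski sums and `C + ⋯ + C = r C` for convex `C`, so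
`conv (r ⊗ Ω) = r ⊙ conv Ω`, and dilating the perspective set by `r` turns the bound `y ≤ 1`
into `Y ≤ r` and `1 - y` into `r - Y`.
-/

open Pointwise Set

section MinkowskiSum

variable {V : Type*} [AddCommMonoid V]

lemma mem_nsum {p : ℕ} {F : Set V} {x : V} :
    x ∈ nsum p F ↔ ∃ f : Fin p → V, (∀ i, f i ∈ F) ∧ x = ∑ i, f i := by
  unfold nsum
  split_ifs with hp
  · subst hp
    simp
  · rfl

lemma nsum_zero (F : Set V) : nsum 0 F = {0} := if_pos rfl

lemma nsum_succ (p : ℕ) (F : Set V) : nsum (p + 1) F = F + nsum p F := by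
  ext x
  simp only [mem_nsum, mem_add]
  constructor
  · rintro ⟨f, hf, rfl⟩
    exact ⟨f 0, hf 0, _, ⟨Fin.tail f, fun i => hf _, rfl⟩, (Fin.sum_univ_succ f).symm⟩
  · rintro ⟨a, ha, _, ⟨g, hg, rfl⟩, rfl⟩
    exact ⟨Fin.cons a g, Fin.cases ha hg, by simp [Fin.sum_univ_succ]⟩

end MinkowskiSum

section Dilation

variable {V : Type*} [AddCommGroup V] [Module ℝ V]

lemma dil_zero (F : Set V) : dil 0 F = {0} := if_pos rfl

lemma dil_of_ne_zero {t : ℝ} (ht : t ≠ 0) (F : Set V) : dil t F = t • F :=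
  (if_neg ht).trans image_smul

lemma dil_of_nonempty (t : ℝ) {F : Set V} (hF : F.Nonempty) : dil t F = t • F := by
  rcases eq_or_ne t 0 with rfl | ht
  · rw [dil_zero, zero_smul_set hF]; rfl
  · exact dil_of_ne_zero ht F

lemma dil_one (F : Set V) : dil 1 F = F := by
  rw [dil_of_ne_zero one_ne_zero, one_smul]

lemma Convex.add_dil_natCast {C : Set V} (hC : Convex ℝ C) (p : ℕ) :
    C + dil p C = dil (p + 1 : ℕ) C := by
  rcases Nat.eq_zero_or_pos p with rfl | hp
  · simp [dil_zero, dil_one]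
  · rw [dil_of_ne_zero (by positivity), dil_of_ne_zero (by positivity), Nat.cast_succ,
      add_comm (p : ℝ), hC.add_smul zero_le_one (by positivity), one_smul]

lemma convexHull_nsum (p : ℕ) (F : Set V) :
    convexHull ℝ (nsum p F) = dil p (convexHull ℝ F) := by
  induction p with
  | zero => rw [nsum_zero, convexHull_singleton, Nat.cast_zero, dil_zero]
  | succ p ih => rw [nsum_succ, convexHull_add, ih, (convex_convexHull ℝ F).add_dil_natCast]

end Dilation

section Perspective

variable {V : Type*} [AddCommGroup V] [Module ℝ V]

/-- The relaxation `Ω̃^agg` of the paper, with the number `r` of units replaced by a real `t`. -/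
def perspectiveSet (Λ Γ : Set V) (t : ℝ) : Set (V × ℝ) :=
  {p | 0 ≤ p.2 ∧ p.2 ≤ t ∧ ∃ w z, w ∈ dil p.2 Λ ∧ z ∈ dil (t - p.2) Γ ∧ p.1 = w + z}

lemma setOf_onOff_eq_union (Λ Γ : Set V) :
    {p : V × ℝ | p.2 ∈ ({0, 1} : Set ℝ) ∧
        ∃ w z, w ∈ dil p.2 Λ ∧ z ∈ dil (1 - p.2) Γ ∧ p.1 = w + z} = Λ ×ˢ {1} ∪ Γ ×ˢ {0} := by
  ext ⟨x, y⟩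
  constructor
  · rintro ⟨rfl | rfl, w, z, hw, hz, rfl⟩ <;> simp_all [dil_zero, dil_one]
  · rintro (⟨hx, rfl⟩ | ⟨hx, rfl⟩) <;> simp_all [dil_zero, dil_one]

variable {Λ Γ : Set V}

lemma mem_perspectiveSet (hΛne : Λ.Nonempty) (hΓne : Γ.Nonempty) {t : ℝ} {p : V × ℝ} :
    p ∈ perspectiveSet Λ Γ t ↔ p.2 ∈ Icc 0 t ∧ p.1 ∈ p.2 • Λ + (t - p.2) • Γ := by
  simp only [perspectiveSet, mem_ofPred_eq, dil_of_nonempty _ hΛne, dil_of_nonempty _ hΓne,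
    mem_Icc, mem_add, and_assoc, exists_and_left, @eq_comm _ p.1]

lemma perspectiveSet_zero (hΛne : Λ.Nonempty) (hΓne : Γ.Nonempty) :
    perspectiveSet Λ Γ 0 = {0} := by
  ext ⟨x, y⟩
  simp only [mem_perspectiveSet hΛne hΓne, Icc_self, mem_singleton_iff, Prod.mk_eq_zero]
  constructor
  · rintro ⟨rfl, hx⟩
    simpa [zero_smul_set hΛne, zero_smul_set hΓne] using hx
  · rintro ⟨rfl, rfl⟩
    simp [zero_smul_set hΛne, zero_smul_set hΓne]

lemma dil_perspectiveSet_one (hΛne : Λ.Nonempty) (hΓne : Γ.Nonempty) {t : ℝ} (ht : 0 ≤ t) :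
    dil t (perspectiveSet Λ Γ 1) = perspectiveSet Λ Γ t := by
  rcases ht.eq_or_lt with rfl | ht
  · rw [dil_zero, perspectiveSet_zero hΛne hΓne]
  ext p
  rw [dil_of_ne_zero ht.ne', mem_smul_set_iff_inv_smul_mem₀ ht.ne',
    mem_perspectiveSet hΛne hΓne, mem_perspectiveSet hΛne hΓne, Prod.smul_fst, Prod.smul_snd,
    smul_eq_mul]
  have hsub : 1 - t⁻¹ * p.2 = t⁻¹ * (t - p.2) := by field_simp
  rw [hsub, mul_smul, mul_smul, ← smul_add, smul_mem_smul_set_iff₀ (inv_ne_zero ht.ne')]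
  refine and_congr_left' ?_
  simp only [mem_Icc, inv_mul_le_one₀ ht, mul_nonneg_iff_of_pos_left (inv_pos.2 ht)]

lemma convexHull_prod_one_union_prod_zero (hΛ : Convex ℝ Λ) (hΓ : Convex ℝ Γ)
    (hΛne : Λ.Nonempty) (hΓne : Γ.Nonempty) :
    convexHull ℝ (Λ ×ˢ {1} ∪ Γ ×ˢ {0}) = perspectiveSet Λ Γ 1 := by
  rw [(hΛ.prod (convex_singleton 1)).convexHull_union (hΓ.prod (convex_singleton 0))
    (hΛne.prod (singleton_nonempty _)) (hΓne.prod (singleton_nonempty _))]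
  ext ⟨x, y⟩
  simp only [mem_convexJoin, mem_perspectiveSet hΛne hΓne]
  constructor
  · rintro ⟨⟨a, _⟩, ⟨ha, rfl⟩, ⟨b, _⟩, ⟨hb, rfl⟩, u, v, hu, hv, huv, h⟩
    simp only [Prod.smul_mk, smul_eq_mul, mul_one, mul_zero, Prod.mk_add_mk, add_zero,
      Prod.mk.injEq] at h
    obtain ⟨rfl, rfl⟩ := h
    obtain rfl : v = 1 - u := by linarith
    exact ⟨⟨hu, by linarith⟩, _, smul_mem_smul_set ha, _, smul_mem_smul_set hb, rfl⟩
  · rintro ⟨⟨hy0, hy1⟩, _, ⟨a, ha, rfl⟩, _, ⟨b, hb, rfl⟩, rfl⟩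
    exact ⟨(a, 1), ⟨ha, rfl⟩, (b, 0), ⟨hb, rfl⟩, y, 1 - y, hy0, by linarith, by ring, by simp⟩

end Perspective

theorem stmt_15_general {d : ℕ} (Λ Γ : Set (Fin d → ℝ))
    (hΛne : Λ.Nonempty) (hΛconv : Convex ℝ Λ)
    (hΓne : Γ.Nonempty) (hΓconv : Convex ℝ Γ)
    (r : ℕ)
    (Ω : Set ((Fin d → ℝ) × ℝ))
    (hΩ : Ω = {p | p.2 ∈ ({0, 1} : Set ℝ) ∧
        ∃ w z, w ∈ dil p.2 Λ ∧ z ∈ dil (1 - p.2) Γ ∧ p.1 = w + z}) :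
    ({p : (Fin d → ℝ) × ℝ | 0 ≤ p.2 ∧ p.2 ≤ (r : ℝ) ∧
        ∃ w z, w ∈ dil p.2 Λ ∧ z ∈ dil ((r : ℝ) - p.2) Γ ∧ p.1 = w + z}
      = convexHull ℝ (nsum r Ω)) ∧
      convexHull ℝ (nsum r Ω) = dil (r : ℝ) (convexHull ℝ Ω) := by
  have hΩ' : Ω = Λ ×ˢ {1} ∪ Γ ×ˢ {0} := hΩ.trans (setOf_onOff_eq_union Λ Γ)
  have hnsum := convexHull_nsum r Ω
  refine ⟨?_, hnsum⟩
  rw [hnsum, hΩ', convexHull_prod_one_union_prod_zero hΛconv hΓconv hΛne hΓne,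
    dil_perspectiveSet_one hΛne hΓne r.cast_nonneg]
  rfl

/-- Tightness of the aggregated perspective relaxation (k = 1 case). -/
theorem stmt_15 {d : ℕ} (Λ Γ : Set (Fin d → ℝ))
    (hΛne : Λ.Nonempty) (hΛc : IsCompact Λ) (hΛconv : Convex ℝ Λ)
    (hΓne : Γ.Nonempty) (hΓc : IsCompact Γ) (hΓconv : Convex ℝ Γ)
    (r : ℕ)
    (Ω : Set ((Fin d → ℝ) × ℝ))
    (hΩ : Ω = {p | p.2 ∈ ({0, 1} : Set ℝ) ∧
        ∃ w z, w ∈ dil p.2 Λ ∧ z ∈ dil (1 - p.2) Γ ∧ p.1 = w + z}) :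
    ({p : (Fin d → ℝ) × ℝ | 0 ≤ p.2 ∧ p.2 ≤ (r : ℝ) ∧
        ∃ w z, w ∈ dil p.2 Λ ∧ z ∈ dil ((r : ℝ) - p.2) Γ ∧ p.1 = w + z}
      = convexHull ℝ (nsum r Ω)) ∧
      convexHull ℝ (nsum r Ω) = dil (r : ℝ) (convexHull ℝ Ω) :=
  stmt_15_general Λ Γ hΛne hΛconv hΓne hΓconv r Ω hΩ
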